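/- Let X = (X_1,...,X_n) be a tuple of vectors in ℝ^d, define Enc(X_i)(z) = Σ_{j=1}^d X_{ij} z^{j-1} ∈ ℝ[z], and let p_X(t,z) = ∏_{i=1}^n (t - Enc(X_i)(z)) ∈ ℝ[t,z]. If p_X = p_Y as polynomials for tuples X, Y ∈ (ℝ^d)^n, then Y is a permutation of X, i.e., there exists σ ∈ S_n with Y_i = X_{σ(i)} for all i. -/

import Mathlib

/-!
Over the domain `ℝ[z]`, the roots of `p_X` in `t`, counted with multiplicity, are the encodings
`Enc(X_i)`, so `p_X = p_Y` gives equal multisets `{Enc(X_i)}` and `{Enc(Y_i)}`. Two tuples with the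
same multiset of values differ by a permutation (match their fibres one value at a time), and
`Enc` is injective since it only relabels coefficients.
-/

open Polynomial

/-- Encoding of a feature vector as a univariate polynomial:
`Enc(w)(z) = ∑_{j=1}^d w_j z^{j-1}`. -/
noncomputable def Enc {d : ℕ} (w : Fin d → ℝ) : Polynomial ℝ :=
  ∑ j : Fin d, C (w j) * X ^ (j : ℕ)

/-- The generalized DeepSets polynomial `p_X(t,z) = ∏ᵢ (t - Enc(Xᵢ)(z))`. -/
noncomputable def genDeepSetsPoly {n d : ℕ} (Xm : Fin n → Fin d → ℝ) :
    Polynomial (Polynomial ℝ) :=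
  ∏ i, ((X : Polynomial (Polynomial ℝ)) - C (Enc (Xm i)))

lemma coeff_Enc {d : ℕ} (w : Fin d → ℝ) (j : Fin d) : (Enc w).coeff j = w j := by
  simp [Enc, coeff_C_mul, coeff_X_pow, Fin.val_inj]

lemma Enc_injective {d : ℕ} : Function.Injective (Enc (d := d)) :=
  fun w v h => funext fun j => by rw [← coeff_Enc w j, ← coeff_Enc v j, h]

lemma Polynomial.roots_finset_prod_X_sub_C {R ι : Type*} [CommRing R] [IsDomain R]
    (s : Finset ι) (f : ι → R) : (∏ i ∈ s, (X - C (f i))).roots = s.val.map f := by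
  rw [Finset.prod_eq_multiset_prod, ← roots_multiset_prod_X_sub_C (s.val.map f), Multiset.map_map]
  rfl

lemma roots_genDeepSetsPoly {n d : ℕ} (Xm : Fin n → Fin d → ℝ) :
    (genDeepSetsPoly Xm).roots = Finset.univ.val.map (fun i => Enc (Xm i)) :=
  roots_finset_prod_X_sub_C _ _

lemma Fintype.exists_perm_of_map_univ_eq {ι α : Type*} [Fintype ι] {f g : ι → α}
    (h : Finset.univ.val.map f = Finset.univ.val.map g) :
    ∃ σ : Equiv.Perm ι, ∀ i, g i = f (σ i) := by
  classical
  have hcard : ∀ a, Fintype.card {i // g i = a} = Fintype.card {i // f i = a} := by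
    intro a
    simp only [Fintype.card_subtype, Finset.card_def, Finset.filter_val, eq_comm (b := a)]
    simpa only [Multiset.count_map] using (congrArg (Multiset.count a) h).symm
  exact ⟨Equiv.ofFiberEquiv fun a => Fintype.equivOfCardEq (hcard a),
    fun i => (Equiv.ofFiberEquiv_map _ i).symm⟩

/-- If the generalized DeepSets polynomials of two tuples of vectors
coincide, then the tuples are permutations of one another. -/
theorem genDeepSetsPoly_separates
    (n d : ℕ) (Xm Ym : Fin n → Fin d → ℝ)
    (h : genDeepSetsPoly Xm = genDeepSetsPoly Ym) :
    ∃ σ : Equiv.Perm (Fin n), ∀ i, Ym i = Xm (σ i) := by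
  have hroots := congrArg roots h
  rw [roots_genDeepSetsPoly, roots_genDeepSetsPoly] at hroots
  obtain ⟨σ, hσ⟩ := Fintype.exists_perm_of_map_univ_eq hroots
  exact ⟨σ, fun i => Enc_injective (hσ i)⟩
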